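/- Let 𝒜 be a collection of hyperplanes in Q = S₁ × ⋯ × Sₙ, no two of which are parallel, let δ ∈ (0, 1/2], and let Pₖ be the distorted measures. Then for each 1 ≤ k ≤ n, E_{k-1}[αₖ(x)²] ≤ (1/|Sₖ|²) · ∏_{j=1}^{k-1} (1 + 3/((1−δ)|Sⱼ|)). -/

import Mathlib

open Finset

attribute [local instance] Classical.propDecidable

/-- A hyperplane in a product `∀ i, S i`: each coordinate factor is either
the full set or a singleton. -/
structure Hyperplane {ι : Type*} (S : ι → Type*) where
  Y : ∀ i, Set (S i)
  full_or_singleton : ∀ i, Y i = Set.univ ∨ ∃ a, Y i = {a}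

namespace Hyperplane

variable {ι : Type*} {S : ι → Type*}

/-- The set of points of the hyperplane. -/
def toSet (A : Hyperplane S) : Set (∀ i, S i) := {x | ∀ i, x i ∈ A.Y i}

/-- The set of fixed coordinates. -/
def fixedSet (A : Hyperplane S) : Set ι := {i | A.Y i ≠ Set.univ}

/-- The fixed coordinates as a `Finset`. -/
noncomputable def fixedFinset [Fintype ι] (A : Hyperplane S) : Finset ι :=
  Finset.univ.filter fun i => A.Y i ≠ Set.univ

end Hyperplane

section Distortion

variable {n : ℕ} {S : Fin n → Type*}

/-- The proportion of the fibre through `x` in direction `k` covered by `B`. -/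
noncomputable def alpha [∀ i, Fintype (S i)] (B : Set (∀ i, S i)) (k : Fin n)
    (x : ∀ i, S i) : ℝ :=
  (Finset.univ.filter fun y : S k => Function.update x k y ∈ B).card / Fintype.card (S k)

/-- The distorted point masses `P_k` of the distortion method, as densities on the
full product: `P 0` is uniform, and `P (k+1)` reweights `P k` on each fibre in
direction `k` according to the covered set `B k`. -/
noncomputable def distP [∀ i, Fintype (S i)] (B : Fin n → Set (∀ i, S i)) (δ : ℝ) :
    ℕ → (∀ i, S i) → ℝ
  | 0, _ => 1 / Fintype.card (∀ i, S i)
  | (k + 1), x =>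
    (if h : k < n then
      (if x ∈ B ⟨k, h⟩ then
        max 0 ((alpha (B ⟨k, h⟩) ⟨k, h⟩ x - δ) / (alpha (B ⟨k, h⟩) ⟨k, h⟩ x * (1 - δ)))
      else
        min (1 / (1 - alpha (B ⟨k, h⟩) ⟨k, h⟩ x)) (1 / (1 - δ)))
     else 1) * distP B δ k x

/-- The `P_k`-measure of a subset of the product. -/
noncomputable def distPMeas [∀ i, Fintype (S i)] (B : Fin n → Set (∀ i, S i)) (δ : ℝ)
    (k : ℕ) (X : Set (∀ i, S i)) : ℝ :=
  ∑ z : ∀ i, S i, if z ∈ X then distP B δ k z else 0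

/-- `X` depends only on the coordinates `i` with `i < m`. -/
def DependsOnLt (X : Set (∀ i, S i)) (m : ℕ) : Prop :=
  ∀ x y : ∀ i, S i, (∀ i : Fin n, (i : ℕ) < m → x i = y i) → x ∈ X → y ∈ X

/-- `B_k`: the union of the hyperplanes of `𝒜` whose largest fixed coordinate is `k`. -/
noncomputable def coverSet [∀ i, Fintype (S i)] (𝒜 : Finset (Hyperplane S)) (k : Fin n) :
    Set (∀ i, S i) :=
  {x | ∃ A ∈ 𝒜, A.fixedFinset.max = (k : WithBot (Fin n)) ∧ x ∈ A.toSet}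

/-- `A^{[m]}`: the hyperplane obtained from `A` by replacing the factors with
index `≥ m` by the full sets. -/
def projSet (A : Hyperplane S) (m : ℕ) : Set (∀ i, S i) :=
  {x | ∀ i : Fin n, (i : ℕ) < m → x i ∈ A.Y i}

end Distortion

section Lemmas
variable {n : ℕ} {S : Fin n → Type*} [∀ i, Fintype (S i)]

/-- The per-step weight of the distortion. -/
noncomputable def stepW (B : Set (∀ i, S i)) (k : Fin n) (δ : ℝ) (x : ∀ i, S i) : ℝ :=
  if x ∈ B then max 0 ((alpha B k x - δ) / (alpha B k x * (1 - δ)))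
  else min (1 / (1 - alpha B k x)) (1 / (1 - δ))

lemma distP_succ (B : Fin n → Set (∀ i, S i)) (δ : ℝ) (m : ℕ) (h : m < n) (x : ∀ i, S i) :
    distP B δ (m + 1) x = stepW (B ⟨m, h⟩) ⟨m, h⟩ δ x * distP B δ m x := by
  simp [distP, stepW, h]

lemma distP_succ_ge (B : Fin n → Set (∀ i, S i)) (δ : ℝ) (m : ℕ) (h : ¬ m < n) (x : ∀ i, S i) :
    distP B δ (m + 1) x = distP B δ m x := by
  simp [distP, h]

lemma alpha_nonneg (B : Set (∀ i, S i)) (k : Fin n) (x : ∀ i, S i) : 0 ≤ alpha B k x := by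
  unfold alpha; positivity

lemma alpha_le_one (B : Set (∀ i, S i)) (k : Fin n) (x : ∀ i, S i) : alpha B k x ≤ 1 := by
  unfold alpha
  rcases Nat.eq_zero_or_pos (Fintype.card (S k)) with h | h
  · simp [h]
  · rw [div_le_one (by exact_mod_cast h)]
    exact_mod_cast (Finset.card_filter_le _ _).trans (by simp)

lemma alpha_update (B : Set (∀ i, S i)) (k : Fin n) (x : ∀ i, S i) (y : S k) :
    alpha B k (Function.update x k y) = alpha B k x := by
  unfold alpha
  congr 1
  norm_cast
  apply Finset.card_bij (fun a _ => a) _ (fun a b _ _ h => h)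
    (fun a ha => ⟨a, by simpa [Function.update_idem] using ha, rfl⟩)
  intro a ha
  simpa [Function.update_idem] using ha

lemma stepW_nonneg {δ : ℝ} (hδ1 : δ ≤ 1 / 2) (B : Set (∀ i, S i)) (k : Fin n) (x : ∀ i, S i) :
    0 ≤ stepW B k δ x := by
  unfold stepW
  split
  · exact le_max_left _ _
  · exact le_min (one_div_nonneg.mpr (by linarith [alpha_le_one B k x]))
      (one_div_nonneg.mpr (by linarith))

lemma stepW_le {δ : ℝ} (hδ0 : 0 < δ) (hδ1 : δ ≤ 1 / 2) (B : Set (∀ i, S i)) (k : Fin n)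
    (x : ∀ i, S i) : stepW B k δ x ≤ 1 / (1 - δ) := by
  have h1δ : (0:ℝ) < 1 - δ := by linarith
  unfold stepW
  split
  · apply max_le (one_div_nonneg.mpr h1δ.le)
    rcases eq_or_lt_of_le (alpha_nonneg B k x) with h | h
    · rw [← h]
      simpa using one_div_nonneg.mpr h1δ.le
    · rw [div_le_div_iff₀ (by positivity) h1δ]
      have := alpha_le_one B k x
      nlinarith
  · exact min_le_right _ _

end Lemmas
section Lemmas2
variable {n : ℕ} {S : Fin n → Type*} [∀ i, Fintype (S i)]

lemma sum_fibre (f : (∀ i, S i) → ℝ) (j : Fin n) :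
    ∑ z : ∀ i, S i, ∑ y : S j, f (Function.update z j y)
      = (Fintype.card (S j) : ℝ) * ∑ z : ∀ i, S i, f z := by
  classical
  set e := Equiv.piSplitAt j S with he
  rw [← Equiv.sum_comp e.symm (fun z => ∑ y : S j, f (Function.update z j y)),
      ← Equiv.sum_comp e.symm f]
  rw [Fintype.sum_prod_type, Fintype.sum_prod_type]
  have key : ∀ (a : S j) (w : ∀ i : {i // i ≠ j}, S i) (y : S j),
      Function.update (e.symm (a, w)) j y = e.symm (y, w) := by
    intro a w y
    funext i
    by_cases h : i = j
    · subst h; rw [he]; simp [Equiv.piSplitAt_symm_apply]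
    · rw [he]; simp [Equiv.piSplitAt_symm_apply, Function.update_of_ne h, h]
  calc ∑ a : S j, ∑ w, ∑ y : S j, f (Function.update (e.symm (a, w)) j y)
      = ∑ a : S j, ∑ w, ∑ y : S j, f (e.symm (y, w)) := by
        simp_rw [key]
    _ = ∑ a : S j, ∑ y : S j, ∑ w, f (e.symm (y, w)) := by
        exact Finset.sum_congr rfl fun a _ => Finset.sum_comm
    _ = (Fintype.card (S j) : ℝ) * ∑ y : S j, ∑ w, f (e.symm (y, w)) := by
        rw [Finset.sum_const, nsmul_eq_mul]; rfl
    _ = _ := rfl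

lemma sum_stepW {δ : ℝ} (hδ0 : 0 < δ) (hδ1 : δ ≤ 1 / 2) (hS : ∀ i, 2 ≤ Fintype.card (S i))
    (B : Set (∀ i, S i)) (j : Fin n) (x : ∀ i, S i) :
    ∑ y : S j, stepW B j δ (Function.update x j y) = (Fintype.card (S j) : ℝ) := by
  classical
  have h1δ : (0:ℝ) < 1 - δ := by linarith
  set N := Fintype.card (S j) with hN
  set m := (Finset.univ.filter fun y : S j => Function.update x j y ∈ B).card with hm
  have hNpos : 0 < (N:ℝ) := by
    have := hS j; rw [← hN] at this; exact_mod_cast this.trans_lt' (by norm_num)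
  have hmN : m ≤ N := by
    rw [hm, hN, Fintype.card]
    exact Finset.card_filter_le _ _
  have halpha : ∀ y : S j, alpha B j (Function.update x j y) = (m : ℝ) / N := by
    intro y
    rw [alpha_update]
    rfl
  have hcardnot : (Finset.univ.filter fun y : S j => Function.update x j y ∉ B).card = N - m := by
    have h2 : (Finset.univ.filter fun y : S j => Function.update x j y ∈ B).card
        + (Finset.univ.filter fun y : S j => Function.update x j y ∉ B).card
        = Fintype.card (S j) :=
      Finset.card_filter_add_card_filter_not _
    rw [← hm, ← hN] at h2
    omega
  have hsplit : ∑ y : S j, stepW B j δ (Function.update x j y)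
      = (m:ℝ) * max 0 (((m:ℝ)/N - δ) / ((m:ℝ)/N * (1 - δ)))
        + ((N:ℝ) - m) * min (1 / (1 - (m:ℝ)/N)) (1 / (1 - δ)) := by
    unfold stepW
    simp_rw [halpha]
    rw [Finset.sum_ite, Finset.sum_const, Finset.sum_const, ← hm, hcardnot,
      nsmul_eq_mul, nsmul_eq_mul, Nat.cast_sub hmN]
  rw [hsplit]
  set a : ℝ := (m:ℝ)/N with ha
  have ha0 : 0 ≤ a := by positivity
  have ha1 : a ≤ 1 := by rw [ha, div_le_one hNpos]; exact_mod_cast hmN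
  rcases lt_or_ge a δ with hc | hc
  · -- small alpha: inside weight 0, outside min is 1/(1-a)
    have hmlt : (m:ℝ) < N := by
      rcases eq_or_lt_of_le ha1 with h | h
      · exfalso; rw [h] at hc; linarith
      · rw [ha, div_lt_one hNpos] at h; exact h
    have hia : (0:ℝ) < 1 - a := by
      rw [ha]; rw [sub_pos, div_lt_one hNpos]; exact hmlt
    have hmax : max 0 ((a - δ) / (a * (1 - δ))) = 0 := by
      rcases eq_or_lt_of_le ha0 with h | h
      · rw [← h]; simp
      · apply max_eq_left
        apply div_nonpos_of_nonpos_of_nonneg (by linarith) (by positivity)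
    have hmin : min (1 / (1 - a)) (1 / (1 - δ)) = 1 / (1 - a) := by
      apply min_eq_left
      apply one_div_le_one_div_of_le h1δ
      linarith
    have hNm0 : (N:ℝ) - m ≠ 0 := by linarith
    rw [hmax, hmin, mul_zero, zero_add, ha]
    rw [show (1:ℝ) - (m:ℝ)/N = ((N:ℝ)-(m:ℝ))/N by field_simp, one_div_div,
      mul_div_assoc']
    rw [mul_comm]
    exact mul_div_cancel_right₀ _ hNm0
  · -- large alpha
    have hm0 : (0:ℝ) < m := by
      by_contra h
      push_neg at h
      have : (m:ℝ) = 0 := le_antisymm h (by positivity)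
      rw [ha, this] at hc
      simp at hc
      linarith
    have ha0' : 0 < a := by rw [ha]; positivity
    have hmax : max 0 ((a - δ) / (a * (1 - δ))) = (a - δ) / (a * (1 - δ)) := by
      apply max_eq_right
      apply div_nonneg (by linarith) (by positivity)
    rw [hmax]
    rcases eq_or_lt_of_le ha1 with h1 | h1
    · -- a = 1, i.e. m = N
      have hmN' : (m:ℝ) = N := by
        rw [ha, div_eq_one_iff_eq hNpos.ne'] at h1
        exact h1
      rw [hmN', sub_self, zero_mul, add_zero, h1, one_mul, div_self h1δ.ne', mul_one]
    · have hia : (0:ℝ) < 1 - a := by linarith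
      have hmin : min (1 / (1 - a)) (1 / (1 - δ)) = 1 / (1 - δ) := by
        apply min_eq_right
        apply one_div_le_one_div_of_le hia
        linarith
      rw [hmin, ha]
      field_simp
      ring

end Lemmas2
section Lemmas3
variable {n : ℕ} {S : Fin n → Type*} [∀ i, Fintype (S i)]

lemma distP_nonneg {δ : ℝ} (hδ1 : δ ≤ 1 / 2) (B : Fin n → Set (∀ i, S i)) (m : ℕ)
    (x : ∀ i, S i) : 0 ≤ distP B δ m x := by
  induction m with
  | zero => unfold distP; positivity
  | succ m ih =>
    by_cases h : m < n
    · rw [distP_succ B δ m h]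
      exact mul_nonneg (stepW_nonneg hδ1 _ _ _) ih
    · rw [distP_succ_ge B δ m h]
      exact ih

lemma distP_le {δ : ℝ} (hδ0 : 0 < δ) (hδ1 : δ ≤ 1 / 2) (B : Fin n → Set (∀ i, S i)) (m : ℕ)
    (x : ∀ i, S i) : distP B δ (m + 1) x ≤ (1 / (1 - δ)) * distP B δ m x := by
  by_cases h : m < n
  · rw [distP_succ B δ m h]
    exact mul_le_mul_of_nonneg_right (stepW_le hδ0 hδ1 _ _ _) (distP_nonneg hδ1 B m x)
  · rw [distP_succ_ge B δ m h]
    have h1 : (1:ℝ) ≤ 1 / (1 - δ) := by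
      rw [le_div_iff₀ (by linarith)]
      linarith
    nlinarith [distP_nonneg hδ1 B m x]

lemma mem_coverSet_congr (𝒜 : Finset (Hyperplane S)) (j : Fin n) {x y : ∀ i, S i}
    (h : ∀ i : Fin n, (i : ℕ) ≤ (j : ℕ) → x i = y i) :
    x ∈ coverSet 𝒜 j ↔ y ∈ coverSet 𝒜 j := by
  have key : ∀ {u v : ∀ i, S i}, (∀ i : Fin n, (i : ℕ) ≤ (j : ℕ) → u i = v i) →
      u ∈ coverSet 𝒜 j → v ∈ coverSet 𝒜 j := by
    rintro u v huv ⟨A, hA, hmax, hu⟩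
    refine ⟨A, hA, hmax, fun i => ?_⟩
    by_cases hi : i ∈ A.fixedFinset
    · have hij : (i : ℕ) ≤ (j : ℕ) := by
        have := Finset.le_max hi
        rw [hmax] at this
        exact_mod_cast (WithBot.coe_le_coe.mp this)
      rw [← huv i hij]
      exact hu i
    · have hY : A.Y i = Set.univ := by
        simpa [Hyperplane.fixedFinset] using hi
      rw [hY]; trivial
  exact ⟨key h, key fun i hi => (h i hi).symm⟩

end Lemmas3
section Lemmas4
variable {n : ℕ} {S : Fin n → Type*} [∀ i, Fintype (S i)]

lemma alpha_coverSet_congr (𝒜 : Finset (Hyperplane S)) (j : Fin n) {x y : ∀ i, S i}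
    (h : ∀ i : Fin n, (i : ℕ) < (j : ℕ) → x i = y i) :
    alpha (coverSet 𝒜 j) j x = alpha (coverSet 𝒜 j) j y := by
  unfold alpha
  congr 2
  apply congrArg Finset.card
  apply Finset.filter_congr
  intro a _
  apply mem_coverSet_congr
  intro i hi
  rcases eq_or_lt_of_le hi with h' | h'
  · have : i = j := Fin.ext h'
    subst this
    simp
  · rw [Function.update_of_ne (by exact fun hc => absurd (congrArg Fin.val hc) (by omega)),
      Function.update_of_ne (by exact fun hc => absurd (congrArg Fin.val hc) (by omega))]
    exact h i h'

lemma distP_congr (𝒜 : Finset (Hyperplane S)) (δ : ℝ) (m : ℕ) {x y : ∀ i, S i}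
    (h : ∀ i : Fin n, (i : ℕ) < m → x i = y i) :
    distP (coverSet 𝒜) δ m x = distP (coverSet 𝒜) δ m y := by
  induction m with
  | zero => rfl
  | succ m ih =>
    have hyp : ∀ i : Fin n, (i : ℕ) < m → x i = y i := fun i hi => h i (by omega)
    by_cases hm : m < n
    · rw [distP_succ _ _ _ hm, distP_succ _ _ _ hm, ih hyp]
      congr 1
      unfold stepW
      have hα : alpha (coverSet 𝒜 ⟨m, hm⟩) ⟨m, hm⟩ x
          = alpha (coverSet 𝒜 ⟨m, hm⟩) ⟨m, hm⟩ y :=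
        alpha_coverSet_congr 𝒜 ⟨m, hm⟩ fun i hi => h i (Nat.lt_succ_of_lt hi)
      have hB : x ∈ coverSet 𝒜 ⟨m, hm⟩ ↔ y ∈ coverSet 𝒜 ⟨m, hm⟩ :=
        mem_coverSet_congr 𝒜 ⟨m, hm⟩ fun i hi => h i (Nat.lt_succ_of_le hi)
      rw [hα]
      by_cases hx : x ∈ coverSet 𝒜 ⟨m, hm⟩
      · rw [if_pos hx, if_pos (hB.mp hx)]
      · rw [if_neg hx, if_neg (fun hc => hx (hB.mpr hc))]
    · rw [distP_succ_ge _ _ _ hm, distP_succ_ge _ _ _ hm, ih hyp]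

lemma distP_update (𝒜 : Finset (Hyperplane S)) (δ : ℝ) (m : ℕ) (j : Fin n)
    (hj : m ≤ (j : ℕ)) (x : ∀ i, S i) (y : S j) :
    distP (coverSet 𝒜) δ m (Function.update x j y) = distP (coverSet 𝒜) δ m x :=
  distP_congr 𝒜 δ m fun i hi =>
    Function.update_of_ne (fun hc => absurd (congrArg Fin.val hc) (by omega)) _ _

/-- Step preservation: reweighting at step `m` preserves the `P`-sum of any function
not depending on coordinate `m`. -/
lemma sum_mul_distP_succ {δ : ℝ} (hδ0 : 0 < δ) (hδ1 : δ ≤ 1 / 2)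
    (hS : ∀ i, 2 ≤ Fintype.card (S i)) (𝒜 : Finset (Hyperplane S)) (m : ℕ) (hm : m < n)
    (f : (∀ i, S i) → ℝ) (hf : ∀ x (y : S ⟨m, hm⟩), f (Function.update x ⟨m, hm⟩ y) = f x) :
    ∑ z : ∀ i, S i, f z * distP (coverSet 𝒜) δ (m + 1) z
      = ∑ z : ∀ i, S i, f z * distP (coverSet 𝒜) δ m z := by
  classical
  set j : Fin n := ⟨m, hm⟩ with hjdef
  have hNpos : (0:ℝ) < Fintype.card (S j) := by
    exact_mod_cast (hS j).trans_lt' (by norm_num)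
  have key : ∀ g : (∀ i, S i) → ℝ,
      ∑ z : ∀ i, S i, g z = (1 / Fintype.card (S j)) * ∑ z : ∀ i, S i, ∑ y : S j,
        g (Function.update z j y) := by
    intro g
    rw [sum_fibre g j, one_div_mul_eq_div, mul_div_cancel_left₀ _ hNpos.ne']
  rw [key (fun z => f z * distP (coverSet 𝒜) δ (m + 1) z),
    key (fun z => f z * distP (coverSet 𝒜) δ m z)]
  congr 1
  apply Finset.sum_congr rfl
  intro z _
  have hPm : ∀ y : S j, distP (coverSet 𝒜) δ m (Function.update z j y)
      = distP (coverSet 𝒜) δ m z := fun y => distP_update 𝒜 δ m j le_rfl z y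
  calc ∑ y : S j, f (Function.update z j y) * distP (coverSet 𝒜) δ (m + 1)
          (Function.update z j y)
      = ∑ y : S j, f z * (stepW (coverSet 𝒜 j) j δ (Function.update z j y)
          * distP (coverSet 𝒜) δ m z) := by
        apply Finset.sum_congr rfl
        intro y _
        rw [hf, distP_succ _ _ _ hm, hPm]
    _ = f z * distP (coverSet 𝒜) δ m z
          * ∑ y : S j, stepW (coverSet 𝒜 j) j δ (Function.update z j y) := by
        rw [Finset.mul_sum]
        apply Finset.sum_congr rfl
        intro y _
        ring
    _ = ∑ y : S j, f (Function.update z j y) * distP (coverSet 𝒜) δ m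
          (Function.update z j y) := by
        rw [sum_stepW hδ0 hδ1 hS]
        rw [Finset.sum_congr rfl fun (y : S j) _ => by rw [hf, hPm]]
        rw [Finset.sum_const, nsmul_eq_mul, Fintype.card]
        ring

end Lemmas4
set_option linter.unusedSectionVars false
section Lemmas5
variable {n : ℕ} {S : Fin n → Type*} [∀ i, Fintype (S i)]

lemma mem_projSet_zero (A : Hyperplane S) (z : ∀ i, S i) : z ∈ projSet A 0 :=
  fun i hi => absurd hi (by omega)

lemma mem_projSet_succ {A : Hyperplane S} {m : ℕ} (hm : m < n) (z : ∀ i, S i) :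
    z ∈ projSet A (m + 1) ↔ z ∈ projSet A m ∧ z ⟨m, hm⟩ ∈ A.Y ⟨m, hm⟩ := by
  constructor
  · intro h
    exact ⟨fun i hi => h i (by omega), h ⟨m, hm⟩ (by simp)⟩
  · rintro ⟨h1, h2⟩ i hi
    rcases Nat.lt_succ_iff_lt_or_eq.mp hi with hi' | hi'
    · exact h1 i hi'
    · have : i = ⟨m, hm⟩ := Fin.ext hi'
      rw [this]
      exact h2

lemma mem_projSet_congr {A : Hyperplane S} {m : ℕ} {x y : ∀ i, S i}
    (h : ∀ i : Fin n, (i : ℕ) < m → x i = y i) : x ∈ projSet A m ↔ y ∈ projSet A m := by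
  constructor <;> intro hx i hi
  · rw [← h i hi]; exact hx i hi
  · rw [h i hi]; exact hx i hi

lemma sum_distP_zero (hS : ∀ i, 2 ≤ Fintype.card (S i)) (B : Fin n → Set (∀ i, S i)) (δ : ℝ) :
    ∑ z : ∀ i, S i, distP B δ 0 z = 1 := by
  have hne : Nonempty (∀ i, S i) := by
    have h : ∀ i, Nonempty (S i) := fun i => Fintype.card_pos_iff.mp (by linarith [hS i])
    exact ⟨fun i => (h i).some⟩
  have hpos : (0:ℝ) < Fintype.card (∀ i, S i) := by exact_mod_cast Fintype.card_pos
  unfold distP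
  rw [Finset.sum_const, nsmul_eq_mul, Fintype.card]
  rw [mul_one_div]
  exact div_self hpos.ne'

lemma proj_meas_le {δ : ℝ} (hδ0 : 0 < δ) (hδ1 : δ ≤ 1 / 2)
    (hS : ∀ i, 2 ≤ Fintype.card (S i)) (𝒜 : Finset (Hyperplane S))
    (A₁ A₂ : Hyperplane S) :
    ∀ m : ℕ, m ≤ n →
      ∑ z : ∀ i, S i, (if z ∈ projSet A₁ m ∧ z ∈ projSet A₂ m then (1:ℝ) else 0)
          * distP (coverSet 𝒜) δ m z
        ≤ ∏ j ∈ (A₁.fixedFinset ∪ A₂.fixedFinset).filter (fun j : Fin n => (j : ℕ) < m),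
            1 / ((1 - δ) * Fintype.card (S j)) := by
  classical
  have h1δ : (0:ℝ) < 1 - δ := by linarith
  intro m
  induction m with
  | zero =>
    intro _
    have hone : ∀ z : ∀ i, S i,
        (if z ∈ projSet A₁ 0 ∧ z ∈ projSet A₂ 0 then (1:ℝ) else 0) = 1 :=
      fun z => if_pos ⟨mem_projSet_zero A₁ z, mem_projSet_zero A₂ z⟩
    have hempty : ((A₁.fixedFinset ∪ A₂.fixedFinset).filter
        (fun j : Fin n => (j : ℕ) < 0)) = ∅ :=
      Finset.filter_false_of_mem (fun j _ => by omega)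
    rw [hempty, Finset.prod_empty]
    calc ∑ z : ∀ i, S i, (if z ∈ projSet A₁ 0 ∧ z ∈ projSet A₂ 0 then (1:ℝ) else 0)
            * distP (coverSet 𝒜) δ 0 z
        = ∑ z : ∀ i, S i, distP (coverSet 𝒜) δ 0 z := by
          exact Finset.sum_congr rfl fun z _ => by rw [hone z, one_mul]
      _ = 1 := sum_distP_zero hS _ δ
      _ ≤ 1 := le_refl _
  | succ m ih =>
    intro hm1
    have hm : m < n := by omega
    set jm : Fin n := ⟨m, hm⟩ with hjdef
    have hNpos : (0:ℝ) < Fintype.card (S jm) := by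
      exact_mod_cast (hS jm).trans_lt' (by norm_num)
    -- indicator splitting
    have hsplit : ∀ z : ∀ i, S i,
        (if z ∈ projSet A₁ (m+1) ∧ z ∈ projSet A₂ (m+1) then (1:ℝ) else 0)
        = (if z ∈ projSet A₁ m ∧ z ∈ projSet A₂ m then (1:ℝ) else 0)
          * (if z jm ∈ A₁.Y jm ∧ z jm ∈ A₂.Y jm then (1:ℝ) else 0) := by
      intro z
      rw [mem_projSet_succ hm, mem_projSet_succ hm]
      by_cases h1 : z ∈ projSet A₁ m ∧ z ∈ projSet A₂ m
      · by_cases h2 : z jm ∈ A₁.Y jm ∧ z jm ∈ A₂.Y jm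
        · rw [if_pos ⟨⟨h1.1, h2.1⟩, h1.2, h2.2⟩, if_pos h1, if_pos h2, mul_one]
        · rw [if_neg (fun hc => h2 ⟨hc.1.2, hc.2.2⟩), if_neg h2, mul_zero]
      · rw [if_neg (fun hc => h1 ⟨hc.1.1, hc.2.1⟩), if_neg h1, zero_mul]
    have hindupd : ∀ (z : ∀ i, S i) (y : S jm),
        (if Function.update z jm y ∈ projSet A₁ m ∧ Function.update z jm y ∈ projSet A₂ m
          then (1:ℝ) else 0)
        = (if z ∈ projSet A₁ m ∧ z ∈ projSet A₂ m then (1:ℝ) else 0) := by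
      intro z y
      have hcongr : ∀ i : Fin n, (i : ℕ) < m → Function.update z jm y i = z i :=
        fun i hi => Function.update_of_ne
          (fun hc => absurd (congrArg Fin.val hc) (by simp [hjdef]; omega)) _ _
      congr 1
      simp only [eq_iff_iff]
      exact and_congr (mem_projSet_congr hcongr) (mem_projSet_congr hcongr)
    by_cases hj : jm ∈ A₁.fixedFinset ∪ A₂.fixedFinset
    · -- coordinate m is fixed by one of the hyperplanes
      obtain ⟨a, ha⟩ : ∃ a : S jm, ∀ y : S jm, y ∈ A₁.Y jm ∧ y ∈ A₂.Y jm → y = a := by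
        rw [Finset.mem_union] at hj
        rcases hj with hj | hj
        · have : A₁.Y jm ≠ Set.univ := by simpa [Hyperplane.fixedFinset] using hj
          rcases A₁.full_or_singleton jm with h | ⟨a, ha⟩
          · exact absurd h this
          · exact ⟨a, fun y hy => by have := hy.1; rw [ha] at this; exact this⟩
        · have : A₂.Y jm ≠ Set.univ := by simpa [Hyperplane.fixedFinset] using hj
          rcases A₂.full_or_singleton jm with h | ⟨a, ha⟩
          · exact absurd h this
          · exact ⟨a, fun y hy => by have := hy.2; rw [ha] at this; exact this⟩
      have step1 : ∑ z : ∀ i, S i, (if z ∈ projSet A₁ (m+1) ∧ z ∈ projSet A₂ (m+1)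
            then (1:ℝ) else 0) * distP (coverSet 𝒜) δ (m+1) z
          ≤ (1 / (1 - δ)) * ∑ z : ∀ i, S i,
            (if z ∈ projSet A₁ m ∧ z ∈ projSet A₂ m then (1:ℝ) else 0)
            * (if z jm = a then (1:ℝ) else 0) * distP (coverSet 𝒜) δ m z := by
        rw [Finset.mul_sum]
        apply Finset.sum_le_sum
        intro z _
        rw [hsplit z, distP_succ _ _ _ hm, ← hjdef]
        have hP := distP_nonneg hδ1 (coverSet 𝒜) m z
        have hw0 := stepW_nonneg hδ1 (coverSet 𝒜 jm) jm z
        have hw1 := stepW_le hδ0 hδ1 (coverSet 𝒜 jm) jm z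
        have hind : (if z jm ∈ A₁.Y jm ∧ z jm ∈ A₂.Y jm then (1:ℝ) else 0)
            ≤ (if z jm = a then (1:ℝ) else 0) := by
          by_cases h : z jm ∈ A₁.Y jm ∧ z jm ∈ A₂.Y jm
          · rw [if_pos h, if_pos (ha _ h)]
          · rw [if_neg h]
            positivity
        by_cases h1 : z ∈ projSet A₁ m ∧ z ∈ projSet A₂ m
        · rw [if_pos h1, one_mul, one_mul]
          calc (if z jm ∈ A₁.Y jm ∧ z jm ∈ A₂.Y jm then (1:ℝ) else 0)
                * (stepW (coverSet 𝒜 jm) jm δ z * distP (coverSet 𝒜) δ m z)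
              ≤ (if z jm = a then (1:ℝ) else 0) * ((1/(1-δ)) * distP (coverSet 𝒜) δ m z) := by
                apply mul_le_mul hind
                · exact mul_le_mul_of_nonneg_right hw1 hP
                · positivity
                · positivity
            _ = 1 / (1 - δ) * ((if z jm = a then (1:ℝ) else 0) * distP (coverSet 𝒜) δ m z) := by
                ring
        · rw [if_neg h1, zero_mul, zero_mul, zero_mul]
          positivity
      have step2 : ∑ z : ∀ i, S i,
            (if z ∈ projSet A₁ m ∧ z ∈ projSet A₂ m then (1:ℝ) else 0)
            * (if z jm = a then (1:ℝ) else 0) * distP (coverSet 𝒜) δ m z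
          = (1 / Fintype.card (S jm)) * ∑ z : ∀ i, S i,
            (if z ∈ projSet A₁ m ∧ z ∈ projSet A₂ m then (1:ℝ) else 0)
            * distP (coverSet 𝒜) δ m z := by
        have hfib := sum_fibre (fun z =>
          (if z ∈ projSet A₁ m ∧ z ∈ projSet A₂ m then (1:ℝ) else 0)
            * (if z jm = a then (1:ℝ) else 0) * distP (coverSet 𝒜) δ m z) jm
        have hinner : ∀ z : ∀ i, S i, ∑ y : S jm,
            (if Function.update z jm y ∈ projSet A₁ m ∧ Function.update z jm y ∈ projSet A₂ m
              then (1:ℝ) else 0)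
            * (if Function.update z jm y jm = a then (1:ℝ) else 0)
            * distP (coverSet 𝒜) δ m (Function.update z jm y)
            = (if z ∈ projSet A₁ m ∧ z ∈ projSet A₂ m then (1:ℝ) else 0)
              * distP (coverSet 𝒜) δ m z := by
          intro z
          have : ∀ y : S jm,
              (if Function.update z jm y ∈ projSet A₁ m ∧ Function.update z jm y ∈ projSet A₂ m
                then (1:ℝ) else 0)
              * (if Function.update z jm y jm = a then (1:ℝ) else 0)
              * distP (coverSet 𝒜) δ m (Function.update z jm y)
              = (if y = a then (1:ℝ) else 0)
                * ((if z ∈ projSet A₁ m ∧ z ∈ projSet A₂ m then (1:ℝ) else 0)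
                  * distP (coverSet 𝒜) δ m z) := by
            intro y
            rw [hindupd z y, Function.update_self,
              distP_update 𝒜 δ m jm (by simp [hjdef]) z y]
            ring
          rw [Finset.sum_congr rfl fun y _ => this y, ← Finset.sum_mul,
            Finset.sum_ite_eq' Finset.univ a (fun _ => (1:ℝ)), if_pos (Finset.mem_univ a),
            one_mul]
        rw [Finset.sum_congr rfl (fun z _ => hinner z)] at hfib
        rw [hfib]
        field_simp
      have hins : ((A₁.fixedFinset ∪ A₂.fixedFinset).filter (fun j : Fin n => (j:ℕ) < m + 1))
          = insert jm ((A₁.fixedFinset ∪ A₂.fixedFinset).filter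
              (fun j : Fin n => (j:ℕ) < m)) := by
        ext j'
        simp only [Finset.mem_filter, Finset.mem_insert]
        constructor
        · rintro ⟨hj', hlt⟩
          rcases Nat.lt_succ_iff_lt_or_eq.mp hlt with h | h
          · exact Or.inr ⟨hj', h⟩
          · exact Or.inl (Fin.ext h)
        · rintro (h | ⟨hj', hlt⟩)
          · subst h; exact ⟨hj, by simp [hjdef]⟩
          · exact ⟨hj', by omega⟩
      have hnotmem : jm ∉ ((A₁.fixedFinset ∪ A₂.fixedFinset).filter
          (fun j : Fin n => (j:ℕ) < m)) := by
        simp [hjdef]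
      rw [hins, Finset.prod_insert hnotmem]
      calc ∑ z : ∀ i, S i, (if z ∈ projSet A₁ (m+1) ∧ z ∈ projSet A₂ (m+1)
              then (1:ℝ) else 0) * distP (coverSet 𝒜) δ (m+1) z
          ≤ (1 / (1 - δ)) * ∑ z : ∀ i, S i,
              (if z ∈ projSet A₁ m ∧ z ∈ projSet A₂ m then (1:ℝ) else 0)
              * (if z jm = a then (1:ℝ) else 0) * distP (coverSet 𝒜) δ m z := step1
        _ = (1 / ((1 - δ) * Fintype.card (S jm))) * ∑ z : ∀ i, S i,
              (if z ∈ projSet A₁ m ∧ z ∈ projSet A₂ m then (1:ℝ) else 0)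
              * distP (coverSet 𝒜) δ m z := by
            rw [step2]
            rw [← mul_assoc, one_div_mul_one_div]
        _ ≤ (1 / ((1 - δ) * Fintype.card (S jm)))
              * ∏ j ∈ (A₁.fixedFinset ∪ A₂.fixedFinset).filter (fun j : Fin n => (j:ℕ) < m),
                  1 / ((1 - δ) * Fintype.card (S j)) := by
            apply mul_le_mul_of_nonneg_left (ih (by omega))
            positivity
    · -- coordinate m is free
      have hC : ∀ z : ∀ i, S i,
          (if z jm ∈ A₁.Y jm ∧ z jm ∈ A₂.Y jm then (1:ℝ) else 0) = 1 := by
        intro z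
        rw [Finset.mem_union] at hj
        push_neg at hj
        have h1 : A₁.Y jm = Set.univ := by simpa [Hyperplane.fixedFinset] using hj.1
        have h2 : A₂.Y jm = Set.univ := by simpa [Hyperplane.fixedFinset] using hj.2
        rw [if_pos ⟨by rw [h1]; trivial, by rw [h2]; trivial⟩]
      have hfilter : (A₁.fixedFinset ∪ A₂.fixedFinset).filter
            (fun j' : Fin n => (j' : ℕ) < m + 1)
          = (A₁.fixedFinset ∪ A₂.fixedFinset).filter (fun j' : Fin n => (j' : ℕ) < m) := by
        apply Finset.filter_congr
        intro j' hj'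
        constructor
        · intro h
          rcases Nat.lt_succ_iff_lt_or_eq.mp h with h | h
          · exact h
          · exact absurd hj' (by rw [show j' = jm from Fin.ext h]; exact hj)
        · omega
      calc ∑ z : ∀ i, S i, (if z ∈ projSet A₁ (m+1) ∧ z ∈ projSet A₂ (m+1)
              then (1:ℝ) else 0) * distP (coverSet 𝒜) δ (m+1) z
          = ∑ z : ∀ i, S i, (if z ∈ projSet A₁ m ∧ z ∈ projSet A₂ m then (1:ℝ) else 0)
              * distP (coverSet 𝒜) δ (m+1) z := by
            apply Finset.sum_congr rfl
            intro z _
            rw [hsplit z, hC z, mul_one]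
        _ = ∑ z : ∀ i, S i, (if z ∈ projSet A₁ m ∧ z ∈ projSet A₂ m then (1:ℝ) else 0)
              * distP (coverSet 𝒜) δ m z := by
            apply sum_mul_distP_succ hδ0 hδ1 hS 𝒜 m hm
            intro x y
            exact hindupd x y
        _ ≤ _ := by
            rw [hfilter]
            exact ih (by omega)

end Lemmas5
section Lemmas6
variable {n : ℕ} {S : Fin n → Type*} [∀ i, Fintype (S i)]

lemma sum_powerset_union_prod (ν : Fin n → ℝ) (T : Finset (Fin n)) :
    ∑ F₁ ∈ T.powerset, ∑ F₂ ∈ T.powerset, ∏ j ∈ F₁ ∪ F₂, ν j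
      = ∏ j ∈ T, (1 + 3 * ν j) := by
  classical
  induction T using Finset.induction_on with
  | empty => simp
  | @insert a s ha ih =>
    have key : ∀ F₁ ∈ s.powerset, ∀ F₂ ∈ s.powerset, a ∉ F₁ ∪ F₂ := by
      intro F₁ h1 F₂ h2 hmem
      rw [Finset.mem_powerset] at h1 h2
      rcases Finset.mem_union.mp hmem with h | h
      exacts [ha (h1 h), ha (h2 h)]
    rw [Finset.sum_powerset_insert ha]
    rw [Finset.sum_congr rfl (fun F₁ _ => Finset.sum_powerset_insert ha
      (f := fun F₂ => ∏ j ∈ F₁ ∪ F₂, ν j))]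
    rw [Finset.sum_congr rfl (fun F₁ _ => Finset.sum_powerset_insert ha
      (f := fun F₂ => ∏ j ∈ insert a F₁ ∪ F₂, ν j))]
    have e1 : ∑ F₁ ∈ s.powerset, (∑ F₂ ∈ s.powerset, ∏ j ∈ F₁ ∪ F₂, ν j
          + ∑ F₂ ∈ s.powerset, ∏ j ∈ F₁ ∪ insert a F₂, ν j)
        = (1 + ν a) * ∏ j ∈ s, (1 + 3 * ν j) := by
      rw [Finset.sum_add_distrib, ih]
      have : ∑ F₁ ∈ s.powerset, ∑ F₂ ∈ s.powerset, ∏ j ∈ F₁ ∪ insert a F₂, ν j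
          = ν a * ∏ j ∈ s, (1 + 3 * ν j) := by
        rw [← ih, Finset.mul_sum]
        refine Finset.sum_congr rfl fun F₁ h1 => ?_
        rw [Finset.mul_sum]
        refine Finset.sum_congr rfl fun F₂ h2 => ?_
        rw [Finset.union_insert, Finset.prod_insert (key F₁ h1 F₂ h2)]
      rw [this]
      ring
    have e2 : ∑ F₁ ∈ s.powerset, (∑ F₂ ∈ s.powerset, ∏ j ∈ insert a F₁ ∪ F₂, ν j
          + ∑ F₂ ∈ s.powerset, ∏ j ∈ insert a F₁ ∪ insert a F₂, ν j)
        = (2 * ν a) * ∏ j ∈ s, (1 + 3 * ν j) := by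
      have h1' : ∑ F₁ ∈ s.powerset, ∑ F₂ ∈ s.powerset, ∏ j ∈ insert a F₁ ∪ F₂, ν j
          = ν a * ∏ j ∈ s, (1 + 3 * ν j) := by
        rw [← ih, Finset.mul_sum]
        refine Finset.sum_congr rfl fun F₁ h1 => ?_
        rw [Finset.mul_sum]
        refine Finset.sum_congr rfl fun F₂ h2 => ?_
        rw [Finset.insert_union, Finset.prod_insert (key F₁ h1 F₂ h2)]
      have h2' : ∑ F₁ ∈ s.powerset, ∑ F₂ ∈ s.powerset,
            ∏ j ∈ insert a F₁ ∪ insert a F₂, ν j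
          = ν a * ∏ j ∈ s, (1 + 3 * ν j) := by
        rw [← ih, Finset.mul_sum]
        refine Finset.sum_congr rfl fun F₁ h1 => ?_
        rw [Finset.mul_sum]
        refine Finset.sum_congr rfl fun F₂ h2 => ?_
        rw [Finset.insert_union, Finset.union_insert, Finset.insert_idem,
          Finset.prod_insert (key F₁ h1 F₂ h2)]
      rw [Finset.sum_add_distrib, h1', h2']
      ring
    rw [e1, e2, Finset.prod_insert ha]
    ring

/-- The full hyperplane. -/
def fullHyp : Hyperplane S := ⟨fun _ => Set.univ, fun _ => Or.inl rfl⟩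

lemma alpha_cover_le (hS : ∀ i, 2 ≤ Fintype.card (S i)) (𝒜 : Finset (Hyperplane S))
    (k : Fin n) (x : ∀ i, S i) :
    alpha (coverSet 𝒜 k) k x
      ≤ ((𝒜.filter fun A => A.fixedFinset.max = (k : WithBot (Fin n))
            ∧ x ∈ projSet A (k : ℕ)).card : ℝ) / Fintype.card (S k) := by
  classical
  have hNpos : (0:ℝ) < Fintype.card (S k) := by
    exact_mod_cast (hS k).trans_lt' (by norm_num)
  unfold alpha
  rw [div_le_div_iff_of_pos_right hNpos]
  norm_cast
  set s := Finset.univ.filter (fun y : S k => Function.update x k y ∈ coverSet 𝒜 k) with hs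
  set t := 𝒜.filter (fun A => A.fixedFinset.max = (k : WithBot (Fin n))
      ∧ x ∈ projSet A (k : ℕ)) with ht
  have hex : ∀ y ∈ s, ∃ A : Hyperplane S, A ∈ 𝒜 ∧ A.fixedFinset.max = (k : WithBot (Fin n))
      ∧ Function.update x k y ∈ A.toSet := by
    intro y hy
    rw [hs, Finset.mem_filter] at hy
    obtain ⟨A, hA, hmax, hmem⟩ := hy.2
    exact ⟨A, hA, hmax, hmem⟩
  set f : S k → Hyperplane S := fun y =>
    if h : ∃ A : Hyperplane S, A ∈ 𝒜 ∧ A.fixedFinset.max = (k : WithBot (Fin n))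
        ∧ Function.update x k y ∈ A.toSet then h.choose else fullHyp with hf
  have hspec : ∀ y ∈ s, f y ∈ 𝒜 ∧ (f y).fixedFinset.max = (k : WithBot (Fin n))
      ∧ Function.update x k y ∈ (f y).toSet := by
    intro y hy
    have h := hex y hy
    rw [hf]
    simp only [dif_pos h]
    exact h.choose_spec
  apply Finset.card_le_card_of_injOn f
  · intro y hy
    obtain ⟨hA, hmax, hmem⟩ := hspec y hy
    rw [ht, Finset.mem_coe, Finset.mem_filter]
    refine ⟨hA, hmax, fun i hi => ?_⟩
    have : Function.update x k y i ∈ (f y).Y i := hmem i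
    rwa [Function.update_of_ne (fun hc => absurd (congrArg Fin.val hc) (by omega))] at this
  · intro y₁ hy₁ y₂ hy₂ heq
    obtain ⟨hA₁, hmax₁, hmem₁⟩ := hspec y₁ hy₁
    obtain ⟨hA₂, hmax₂, hmem₂⟩ := hspec y₂ hy₂
    have hk : k ∈ (f y₁).fixedFinset := Finset.mem_of_max hmax₁
    have hY : (f y₁).Y k ≠ Set.univ := by
      simpa [Hyperplane.fixedFinset] using hk
    rcases (f y₁).full_or_singleton k with h | ⟨a, hsing⟩
    · exact absurd h hY
    · have h1 : y₁ ∈ (f y₁).Y k := by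
        have := hmem₁ k
        rwa [Function.update_self] at this
      have h2 : y₂ ∈ (f y₁).Y k := by
        have := hmem₂ k
        rw [Function.update_self] at this
        rwa [heq]
      rw [hsing] at h1 h2
      rw [h1, h2]

lemma fixedFinset_eq_insert {A : Hyperplane S} {k : Fin n}
    (hmax : A.fixedFinset.max = (k : WithBot (Fin n))) :
    A.fixedFinset = insert k (A.fixedFinset.filter (fun j : Fin n => (j : ℕ) < (k : ℕ))) := by
  ext j
  simp only [Finset.mem_insert, Finset.mem_filter]
  constructor
  · intro hj
    have hle : (j : ℕ) ≤ (k : ℕ) := by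
      have := Finset.le_max hj
      rw [hmax] at this
      exact_mod_cast WithBot.coe_le_coe.mp this
    rcases eq_or_lt_of_le hle with h | h
    · exact Or.inl (Fin.ext h)
    · exact Or.inr ⟨hj, h⟩
  · rintro (h | ⟨hj, _⟩)
    · subst h; exact Finset.mem_of_max hmax
    · exact hj

end Lemmas6

/-- Second moment bound in product form: for non-parallel hyperplanes,
`E_{k-1}[α_k(x)²] ≤ |S_k|⁻² ∏_{j<k} (1 + 3/((1-δ)|S_j|))`. -/
theorem moment_le_prod {n : ℕ} {S : Fin n → Type*} [∀ i, Fintype (S i)]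
    (hS : ∀ i, 2 ≤ Fintype.card (S i)) (δ : ℝ) (hδ0 : 0 < δ) (hδ1 : δ ≤ 1 / 2)
    (𝒜 : Finset (Hyperplane S))
    (hpar : ∀ A₁ ∈ 𝒜, ∀ A₂ ∈ 𝒜, A₁ ≠ A₂ → A₁.fixedFinset ≠ A₂.fixedFinset)
    (i : Fin n) :
    ∑ z : ∀ j, S j, (alpha (coverSet 𝒜 i) i z) ^ 2 * distP (coverSet 𝒜) δ (i : ℕ) z
      ≤ (1 / (Fintype.card (S i) : ℝ) ^ 2) *
        ∏ j ∈ (Finset.univ.filter fun j : Fin n => (j : ℕ) < (i : ℕ)),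
          (1 + 3 / ((1 - δ) * Fintype.card (S j))) := by
  classical
  have h1δ : (0:ℝ) < 1 - δ := by linarith
  have hNpos : (0:ℝ) < Fintype.card (S i) := by
    exact_mod_cast (hS i).trans_lt' (by norm_num)
  set ν : Fin n → ℝ := fun j => 1 / ((1 - δ) * Fintype.card (S j)) with hν
  have hν0 : ∀ j, 0 ≤ ν j := by
    intro j
    rw [hν]
    positivity
  set 𝒜k := 𝒜.filter (fun A => A.fixedFinset.max = (i : WithBot (Fin n))) with h𝒜k
  set φ : Hyperplane S → Finset (Fin n) :=
    fun A => A.fixedFinset.filter (fun j : Fin n => (j : ℕ) < (i : ℕ)) with hφ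
  set T := Finset.univ.filter (fun j : Fin n => (j : ℕ) < (i : ℕ)) with hT
  set P : (∀ j, S j) → ℝ := fun z => distP (coverSet 𝒜) δ (i : ℕ) z with hP
  have hPnn : ∀ z, 0 ≤ P z := fun z => distP_nonneg hδ1 _ _ z
  -- Step 1 : pointwise bound on alpha
  have hcard : ∀ z : ∀ j, S j,
      (𝒜.filter fun A => A.fixedFinset.max = (i : WithBot (Fin n)) ∧ z ∈ projSet A (i : ℕ))
      = 𝒜k.filter (fun A => z ∈ projSet A (i : ℕ)) := by
    intro z
    rw [h𝒜k, Finset.filter_filter]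
  have step1 : ∑ z : ∀ j, S j, (alpha (coverSet 𝒜 i) i z) ^ 2 * P z
      ≤ (1 / (Fintype.card (S i) : ℝ) ^ 2) * ∑ z : ∀ j, S j,
        ((𝒜k.filter (fun A => z ∈ projSet A (i : ℕ))).card : ℝ) ^ 2 * P z := by
    rw [Finset.mul_sum]
    apply Finset.sum_le_sum
    intro z _
    have h1 : alpha (coverSet 𝒜 i) i z
        ≤ ((𝒜k.filter (fun A => z ∈ projSet A (i : ℕ))).card : ℝ) / Fintype.card (S i) := by
      have := alpha_cover_le hS 𝒜 i z
      rwa [hcard z] at this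
    have h2 : (alpha (coverSet 𝒜 i) i z) ^ 2
        ≤ (((𝒜k.filter (fun A => z ∈ projSet A (i : ℕ))).card : ℝ) / Fintype.card (S i)) ^ 2 :=
      pow_le_pow_left₀ (alpha_nonneg _ _ _) h1 2
    calc (alpha (coverSet 𝒜 i) i z) ^ 2 * P z
        ≤ (((𝒜k.filter (fun A => z ∈ projSet A (i : ℕ))).card : ℝ)
            / Fintype.card (S i)) ^ 2 * P z := mul_le_mul_of_nonneg_right h2 (hPnn z)
      _ = 1 / (Fintype.card (S i) : ℝ) ^ 2
            * (((𝒜k.filter (fun A => z ∈ projSet A (i : ℕ))).card : ℝ) ^ 2 * P z) := by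
          rw [div_pow]
          ring
  -- Step 2 : expand the square as a double sum
  have hindmul : ∀ (z : ∀ j, S j) (A₁ A₂ : Hyperplane S),
      (if z ∈ projSet A₁ (i : ℕ) then (1:ℝ) else 0)
        * (if z ∈ projSet A₂ (i : ℕ) then (1:ℝ) else 0)
      = (if z ∈ projSet A₁ (i : ℕ) ∧ z ∈ projSet A₂ (i : ℕ) then (1:ℝ) else 0) := by
    intro z A₁ A₂
    by_cases h1 : z ∈ projSet A₁ (i : ℕ) <;> by_cases h2 : z ∈ projSet A₂ (i : ℕ) <;>
      simp [h1, h2]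
  have step2 : ∑ z : ∀ j, S j,
        ((𝒜k.filter (fun A => z ∈ projSet A (i : ℕ))).card : ℝ) ^ 2 * P z
      = ∑ A₁ ∈ 𝒜k, ∑ A₂ ∈ 𝒜k, ∑ z : ∀ j, S j,
          (if z ∈ projSet A₁ (i : ℕ) ∧ z ∈ projSet A₂ (i : ℕ) then (1:ℝ) else 0) * P z := by
    have hc : ∀ z : ∀ j, S j, ((𝒜k.filter (fun A => z ∈ projSet A (i : ℕ))).card : ℝ)
        = ∑ A ∈ 𝒜k, if z ∈ projSet A (i : ℕ) then (1:ℝ) else 0 := by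
      intro z
      rw [Finset.sum_boole]
    calc ∑ z : ∀ j, S j, ((𝒜k.filter (fun A => z ∈ projSet A (i : ℕ))).card : ℝ) ^ 2 * P z
        = ∑ z : ∀ j, S j, ∑ A₁ ∈ 𝒜k, ∑ A₂ ∈ 𝒜k,
            (if z ∈ projSet A₁ (i : ℕ) ∧ z ∈ projSet A₂ (i : ℕ) then (1:ℝ) else 0) * P z := by
          apply Finset.sum_congr rfl
          intro z _
          rw [hc z, sq, Finset.sum_mul_sum, Finset.sum_mul]
          apply Finset.sum_congr rfl
          intro A₁ _
          rw [Finset.sum_mul]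
          apply Finset.sum_congr rfl
          intro A₂ _
          rw [hindmul z A₁ A₂]
      _ = _ := by
          rw [Finset.sum_comm]
          apply Finset.sum_congr rfl
          intro A₁ _
          rw [Finset.sum_comm]
  -- Step 3 : bound each term via the distortion estimate
  have step3 : ∑ A₁ ∈ 𝒜k, ∑ A₂ ∈ 𝒜k, ∑ z : ∀ j, S j,
        (if z ∈ projSet A₁ (i : ℕ) ∧ z ∈ projSet A₂ (i : ℕ) then (1:ℝ) else 0) * P z
      ≤ ∑ A₁ ∈ 𝒜k, ∑ A₂ ∈ 𝒜k, ∏ j ∈ φ A₁ ∪ φ A₂, ν j := by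
    apply Finset.sum_le_sum
    intro A₁ _
    apply Finset.sum_le_sum
    intro A₂ _
    have := proj_meas_le hδ0 hδ1 hS 𝒜 A₁ A₂ (i : ℕ) i.isLt.le
    rw [Finset.filter_union] at this
    exact this
  -- Step 4 : injectivity and comparison with the full powerset sum
  have hmaxmem : ∀ A ∈ 𝒜k, A ∈ 𝒜 ∧ A.fixedFinset.max = (i : WithBot (Fin n)) := by
    intro A hA
    rw [h𝒜k, Finset.mem_filter] at hA
    exact hA
  have hinj : ∀ A₁ ∈ 𝒜k, ∀ A₂ ∈ 𝒜k, φ A₁ = φ A₂ → A₁ = A₂ := by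
    intro A₁ h1 A₂ h2 heq
    by_contra hne
    apply hpar A₁ (hmaxmem A₁ h1).1 A₂ (hmaxmem A₂ h2).1 hne
    rw [fixedFinset_eq_insert (hmaxmem A₁ h1).2, fixedFinset_eq_insert (hmaxmem A₂ h2).2]
    exact congrArg (insert i) heq
  have hsub : 𝒜k.image φ ⊆ T.powerset := by
    intro G hG
    rw [Finset.mem_image] at hG
    obtain ⟨A, _, rfl⟩ := hG
    rw [Finset.mem_powerset, hφ, hT]
    intro j hj
    rw [Finset.mem_filter] at hj ⊢
    exact ⟨Finset.mem_univ j, hj.2⟩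
  have step4 : ∑ A₁ ∈ 𝒜k, ∑ A₂ ∈ 𝒜k, ∏ j ∈ φ A₁ ∪ φ A₂, ν j
      ≤ ∑ F₁ ∈ T.powerset, ∑ F₂ ∈ T.powerset, ∏ j ∈ F₁ ∪ F₂, ν j := by
    have hre : ∑ A₁ ∈ 𝒜k, ∑ A₂ ∈ 𝒜k, ∏ j ∈ φ A₁ ∪ φ A₂, ν j
        = ∑ G₁ ∈ 𝒜k.image φ, ∑ G₂ ∈ 𝒜k.image φ, ∏ j ∈ G₁ ∪ G₂, ν j := by
      rw [Finset.sum_image hinj]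
      apply Finset.sum_congr rfl
      intro A₁ _
      rw [Finset.sum_image hinj]
    rw [hre]
    calc ∑ G₁ ∈ 𝒜k.image φ, ∑ G₂ ∈ 𝒜k.image φ, ∏ j ∈ G₁ ∪ G₂, ν j
        ≤ ∑ G₁ ∈ 𝒜k.image φ, ∑ G₂ ∈ T.powerset, ∏ j ∈ G₁ ∪ G₂, ν j := by
          apply Finset.sum_le_sum
          intro G₁ _
          apply Finset.sum_le_sum_of_subset_of_nonneg hsub
          intro G₂ _ _
          exact Finset.prod_nonneg fun j _ => hν0 j
      _ ≤ _ := by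
          apply Finset.sum_le_sum_of_subset_of_nonneg hsub
          intro G₁ _ _
          apply Finset.sum_nonneg
          intro G₂ _
          exact Finset.prod_nonneg fun j _ => hν0 j
  -- Step 5 : compute the powerset sum
  have step5 : ∑ F₁ ∈ T.powerset, ∑ F₂ ∈ T.powerset, ∏ j ∈ F₁ ∪ F₂, ν j
      = ∏ j ∈ T, (1 + 3 / ((1 - δ) * Fintype.card (S j))) := by
    rw [sum_powerset_union_prod ν T]
    apply Finset.prod_congr rfl
    intro j _
    rw [hν, mul_one_div]
  calc ∑ z : ∀ j, S j, (alpha (coverSet 𝒜 i) i z) ^ 2 * P z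
      ≤ (1 / (Fintype.card (S i) : ℝ) ^ 2) * ∑ z : ∀ j, S j,
          ((𝒜k.filter (fun A => z ∈ projSet A (i : ℕ))).card : ℝ) ^ 2 * P z := step1
    _ ≤ (1 / (Fintype.card (S i) : ℝ) ^ 2)
          * ∏ j ∈ T, (1 + 3 / ((1 - δ) * Fintype.card (S j))) := by
        apply mul_le_mul_of_nonneg_left _ (by positivity)
        rw [step2, ← step5]
        exact step3.trans step4
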